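/- arXiv:2407.16778 — 2 statements merged into one kernel-verified Lean document; each statement's English description precedes it below -/
import Mathlib

section
/- Let n ≥ 1, let p be an integer with 1 ≤ p ≤ n, and let A be an n×n real matrix all of whose entries are integers. Then the associated over-approximation sequence (D_p^k)_{k≥1} stabilizes after finitely many steps: there exists K ≥ 1 such that D_p^k = D_p^K for all k ≥ K. -/
/-- `MinMaxValue(F | p, n+1−p)`: the minimum over all pairs `(S₁, S₂)` of subsets of
`{1,…,n}` with `|S₁| = p` and `|S₂| = n+1−p` of `max_{(i,j) ∈ S₁×S₂} F i j`, where the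
entries lie in `ℝ ∪ {−∞}` (modeled as `WithBot ℝ`). -/
noncomputable def minMaxValue {n : ℕ} (p : ℕ) (F : Fin n → Fin n → WithBot ℝ) : WithBot ℝ :=
  sInf {v : WithBot ℝ | ∃ S₁ S₂ : Finset (Fin n), S₁.card = p ∧ S₂.card = n + 1 - p ∧
    v = (S₁ ×ˢ S₂).sup (fun q => F q.1 q.2)}

/-- The over-approximation sequence `(D_p^k)_{k ≥ 0}` associated with `A`: `D_p^0` is the
max-plus identity matrix and
`D_p^{k+1}(i,j) = MinMaxValue((l,m) ↦ A i l − A j m + D_p^k l m | p, n+1−p)`. -/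
noncomputable def Dseq {n : ℕ} (A : Fin n → Fin n → ℝ) (p : ℕ) :
    ℕ → Fin n → Fin n → WithBot ℝ
  | 0 => fun i j => if i = j then 0 else ⊥
  | (k + 1) => fun i j =>
      minMaxValue p (fun l m => ((A i l - A j m : ℝ) : WithBot ℝ) + Dseq A p k l m)

/-- The zone of a DBM `D` over `ℝ ∪ {−∞}`: all real vectors `x` with
`x i − x j ≥ D i j` for all `i, j`. -/
def zone {n : ℕ} (D : Fin n → Fin n → WithBot ℝ) : Set (Fin n → ℝ) :=
  {x | ∀ i j, D i j ≤ ((x i - x j : ℝ) : WithBot ℝ)}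

/-!
Writing `D_p^{k+1} = T (D_p^k)`, the operator `T` is monotone, and `D_p^0 ≤ D_p^1` because
every `S₁` of size `p` meets every `S₂` of size `n + 1 - p`, so the diagonal bounds the min-max
from below; hence the sequence is nondecreasing.
If `x` lies in the zone of `D`, then `y i :=` a `p`-th smallest entry of `l ↦ A i l + x l` lies in
the zone of `T D`, and `y i - y j ≤ A i l - A j l` for some `l`. So for `k ≥ 1` the entries of
`D_p^k` lie between `-B` and `B`, where `B` bounds all `A i l - A j l`. For integer `A` they are
integers, so the `D_p^k` with `k ≥ 1` take finitely many values, and a nondecreasing sequence with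
finitely many values is eventually constant.
-/

open Finset

theorem Monotone.exists_forall_ge_eq_of_finite_range {α : Type*} [PartialOrder α] {f : ℕ → α}
    (hf : Monotone f) (hfin : (Set.range f).Finite) : ∃ K, ∀ k, K ≤ k → f k = f K := by
  obtain ⟨_, ⟨K, rfl⟩, hmax⟩ := hfin.exists_maximal (Set.range_nonempty f)
  exact ⟨K, fun k hk => (hf hk).antisymm' (hmax ⟨k, rfl⟩ (hf hk))⟩

variable {n p : ℕ}

theorem exists_finset_card_eq {m : ℕ} (h : m ≤ n) : ∃ S : Finset (Fin n), #S = m :=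
  (exists_subset_card_eq (s := univ) (by simpa using h)).imp fun _ => And.right

theorem exists_diag_mem_product (hpn : p ≤ n) {S₁ S₂ : Finset (Fin n)} (h₁ : #S₁ = p)
    (h₂ : #S₂ = n + 1 - p) : ∃ l, (l, l) ∈ S₁ ×ˢ S₂ := by
  obtain ⟨l, hl⟩ :=
    inter_nonempty_of_card_lt_card_add_card (subset_univ S₁) (subset_univ S₂) (by simp; omega)
  exact ⟨l, mem_product.2 (mem_inter.1 hl)⟩

/-- `t` is a `p`-th smallest entry of `v`. -/
theorem exists_card_le_and_card_ge (hp1 : 1 ≤ p) (hpn : p ≤ n) (v : Fin n → ℝ) :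
    ∃ t, p ≤ #{l | v l ≤ t} ∧ n + 1 - p ≤ #{l | t ≤ v l} := by
  set T := (univ.image v).filter fun t => p ≤ #{l | v l ≤ t}
  have hT : T.Nonempty := by
    obtain ⟨l₀, -, hl₀⟩ := univ.exists_max_image v (univ_nonempty_iff.2 ⟨⟨0, by omega⟩⟩)
    refine ⟨v l₀, mem_filter.2 ⟨mem_image_of_mem v (mem_univ _), ?_⟩⟩
    simpa [filter_true_of_mem fun l _ => hl₀ l (mem_univ l)] using hpn
  refine ⟨T.min' hT, (mem_filter.1 (T.min'_mem hT)).2, ?_⟩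
  by_contra! hlt
  have hL : p ≤ #({l | v l < T.min' hT} : Finset (Fin n)) := by
    have := card_filter_add_card_filter_not (s := univ) (fun l => T.min' hT ≤ v l)
    simp only [not_le, card_univ, Fintype.card_fin] at this
    omega
  obtain ⟨l₁, hl₁, hmax⟩ :=
    exists_max_image ({l | v l < T.min' hT} : Finset (Fin n)) v (card_pos.1 (by omega))
  have hcand : v l₁ ∈ T :=
    mem_filter.2 ⟨mem_image_of_mem v (mem_univ _), hL.trans (card_le_card fun l hl =>
      mem_filter.2 ⟨mem_univ l, hmax l hl⟩)⟩
  exact (not_le.2 (mem_filter.1 hl₁).2) (T.min'_le _ hcand)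

section MinMaxValue

variable {F G : Fin n → Fin n → WithBot ℝ}

theorem minMaxValue_le {S₁ S₂ : Finset (Fin n)} (h₁ : #S₁ = p) (h₂ : #S₂ = n + 1 - p) :
    minMaxValue p F ≤ (S₁ ×ˢ S₂).sup fun q => F q.1 q.2 :=
  csInf_le (OrderBot.bddBelow _) ⟨S₁, S₂, h₁, h₂, rfl⟩

theorem le_minMaxValue (hp1 : 1 ≤ p) (hpn : p ≤ n) {c : WithBot ℝ}
    (h : ∀ S₁ S₂ : Finset (Fin n), #S₁ = p → #S₂ = n + 1 - p →
      c ≤ (S₁ ×ˢ S₂).sup fun q => F q.1 q.2) :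
    c ≤ minMaxValue p F := by
  obtain ⟨S₁, h₁⟩ := exists_finset_card_eq hpn
  obtain ⟨S₂, h₂⟩ := exists_finset_card_eq (n := n) (m := n + 1 - p) (by omega)
  refine le_csInf ⟨_, S₁, S₂, h₁, h₂, rfl⟩ ?_
  rintro _ ⟨S₁, S₂, h₁, h₂, rfl⟩
  exact h S₁ S₂ h₁ h₂

theorem le_minMaxValue_of_forall_le_diag (hp1 : 1 ≤ p) (hpn : p ≤ n) {c : WithBot ℝ}
    (h : ∀ l, c ≤ F l l) : c ≤ minMaxValue p F :=
  le_minMaxValue hp1 hpn fun _ _ h₁ h₂ =>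
    have ⟨l, hl⟩ := exists_diag_mem_product hpn h₁ h₂
    (h l).trans (le_sup (f := fun q : Fin n × Fin n => F q.1 q.2) hl)

theorem minMaxValue_mono (hp1 : 1 ≤ p) (hpn : p ≤ n) (h : F ≤ G) :
    minMaxValue p F ≤ minMaxValue p G :=
  le_minMaxValue hp1 hpn fun _ _ h₁ h₂ =>
    (minMaxValue_le h₁ h₂).trans (sup_mono_fun fun q _ => h q.1 q.2)

theorem exists_minMaxValue_eq_apply (hp1 : 1 ≤ p) (hpn : p ≤ n) (F : Fin n → Fin n → WithBot ℝ) :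
    ∃ l m, minMaxValue p F = F l m := by
  set V := {v : WithBot ℝ | ∃ S₁ S₂ : Finset (Fin n), #S₁ = p ∧ #S₂ = n + 1 - p ∧
      v = (S₁ ×ˢ S₂).sup fun q => F q.1 q.2}
  have hfin : V.Finite :=
    (Set.finite_range fun S : Finset (Fin n) × Finset (Fin n) =>
      (S.1 ×ˢ S.2).sup fun q => F q.1 q.2).subset
      (by rintro _ ⟨S₁, S₂, -, -, rfl⟩; exact ⟨(S₁, S₂), rfl⟩)
  obtain ⟨S₁, h₁⟩ := exists_finset_card_eq hpn
  obtain ⟨S₂, h₂⟩ := exists_finset_card_eq (n := n) (m := n + 1 - p) (by omega)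
  obtain ⟨S₁, S₂, h₁, h₂, hS⟩ := Set.Nonempty.csInf_mem (s := V) ⟨_, S₁, S₂, h₁, h₂, rfl⟩ hfin
  obtain ⟨⟨l, m⟩, -, hlm⟩ := exists_mem_eq_sup (S₁ ×ˢ S₂)
    ((exists_diag_mem_product hpn h₁ h₂).elim fun _ hl => ⟨_, hl⟩) fun q => F q.1 q.2
  exact ⟨l, m, hS.trans hlm⟩

end MinMaxValue

variable {A : Fin n → Fin n → ℝ}

noncomputable def DseqStep (A : Fin n → Fin n → ℝ) (p : ℕ) (D : Fin n → Fin n → WithBot ℝ) :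
    Fin n → Fin n → WithBot ℝ :=
  fun i j => minMaxValue p fun l m => ((A i l - A j m : ℝ) : WithBot ℝ) + D l m

theorem Dseq_succ (A : Fin n → Fin n → ℝ) (p k : ℕ) :
    Dseq A p (k + 1) = DseqStep A p (Dseq A p k) := rfl

theorem DseqStep_mono (hp1 : 1 ≤ p) (hpn : p ≤ n) : Monotone (DseqStep A p) :=
  fun _ _ h _ _ => minMaxValue_mono hp1 hpn fun l m => add_le_add_right (h l m) _

theorem Dseq_zero_le_one (hp1 : 1 ≤ p) (hpn : p ≤ n) : Dseq A p 0 ≤ Dseq A p 1 := by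
  intro i j
  by_cases hij : i = j
  · subst hij
    rw [Dseq_succ]
    exact le_minMaxValue_of_forall_le_diag hp1 hpn fun l => by simp [Dseq]
  · simp [Dseq, hij]

theorem Dseq_monotone (hp1 : 1 ≤ p) (hpn : p ≤ n) : Monotone (Dseq A p) := by
  refine monotone_nat_of_le_succ fun k => ?_
  induction k with
  | zero => exact Dseq_zero_le_one hp1 hpn
  | succ k ih => exact DseqStep_mono hp1 hpn ih

theorem Dseq_eq_bot_or_intCast (hA : ∀ i j, ∃ z : ℤ, A i j = (z : ℝ)) (hp1 : 1 ≤ p)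
    (hpn : p ≤ n) (k : ℕ) (i j : Fin n) :
    Dseq A p k i j = ⊥ ∨ ∃ z : ℤ, Dseq A p k i j = ((z : ℝ) : WithBot ℝ) := by
  induction k generalizing i j with
  | zero =>
    by_cases hij : i = j
    · exact Or.inr ⟨0, by simp [Dseq, hij]⟩
    · exact Or.inl (by simp [Dseq, hij])
  | succ k ih =>
    obtain ⟨l, m, hlm⟩ := exists_minMaxValue_eq_apply hp1 hpn
      fun l m => ((A i l - A j m : ℝ) : WithBot ℝ) + Dseq A p k l m
    rw [Dseq_succ, DseqStep, hlm]
    obtain ⟨a, ha⟩ := hA i l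
    obtain ⟨b, hb⟩ := hA j m
    rcases ih l m with h | ⟨z, hz⟩
    · exact Or.inl (by simp [h])
    · exact Or.inr ⟨a - b + z, by rw [hz, ha, hb, ← WithBot.coe_add]; congr 1; push_cast; ring⟩

theorem exists_mem_zone_DseqStep (hp1 : 1 ≤ p) (hpn : p ≤ n) {D : Fin n → Fin n → WithBot ℝ}
    {x : Fin n → ℝ} (hx : x ∈ zone D) :
    ∃ y ∈ zone (DseqStep A p D), ∀ i j, ∃ l, y i - y j ≤ A i l - A j l := by
  choose y hle hge using fun i => exists_card_le_and_card_ge hp1 hpn fun l => A i l + x l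
  refine ⟨y, fun i j => ?_, fun i j => ?_⟩
  · obtain ⟨S₁, hS₁, h₁⟩ := exists_subset_card_eq (hle i)
    obtain ⟨S₂, hS₂, h₂⟩ := exists_subset_card_eq (hge j)
    refine (minMaxValue_le h₁ h₂).trans (Finset.sup_le fun ⟨l, m⟩ hlm => ?_)
    obtain ⟨hl, hm⟩ := mem_product.1 hlm
    have hil := (mem_filter.1 (hS₁ hl)).2
    have hjm := (mem_filter.1 (hS₂ hm)).2
    calc ((A i l - A j m : ℝ) : WithBot ℝ) + D l m
        ≤ ((A i l - A j m : ℝ) : WithBot ℝ) + ((x l - x m : ℝ) : WithBot ℝ) :=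
          add_le_add_right (hx l m) _
      _ ≤ ((y i - y j : ℝ) : WithBot ℝ) := by
          rw [← WithBot.coe_add, WithBot.coe_le_coe]; linarith
  · obtain ⟨l, hl⟩ := inter_nonempty_of_card_lt_card_add_card (subset_univ _) (subset_univ _)
      (by simp only [card_univ, Fintype.card_fin]; have := hge i; have := hle j; omega :
        #(univ : Finset (Fin n)) < #{l | y i ≤ A i l + x l} + #{l | A j l + x l ≤ y j})
    simp only [mem_inter, mem_filter, mem_univ, true_and] at hl
    exact ⟨l, by linarith [hl.1, hl.2]⟩

theorem zone_Dseq_nonempty (hp1 : 1 ≤ p) (hpn : p ≤ n) (k : ℕ) : (zone (Dseq A p k)).Nonempty := by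
  induction k with
  | zero => exact ⟨0, fun i j => by by_cases hij : i = j <;> simp [Dseq, hij]⟩
  | succ k ih =>
    obtain ⟨x, hx⟩ := ih
    obtain ⟨y, hy, -⟩ := exists_mem_zone_DseqStep hp1 hpn hx
    exact ⟨y, hy⟩

theorem Dseq_succ_le {B : ℝ} (hB : ∀ i j l, A i l - A j l ≤ B) (hp1 : 1 ≤ p) (hpn : p ≤ n)
    (k : ℕ) (i j : Fin n) : Dseq A p (k + 1) i j ≤ (B : WithBot ℝ) := by
  obtain ⟨x, hx⟩ := zone_Dseq_nonempty hp1 hpn k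
  obtain ⟨y, hy, hyA⟩ := exists_mem_zone_DseqStep hp1 hpn hx
  obtain ⟨l, hl⟩ := hyA i j
  exact (hy i j).trans (WithBot.coe_le_coe.2 (hl.trans (hB i j l)))

theorem neg_le_Dseq_succ {B : ℝ} (hB : ∀ i j l, A i l - A j l ≤ B) (hp1 : 1 ≤ p) (hpn : p ≤ n)
    (k : ℕ) (i j : Fin n) :
    ((-B : ℝ) : WithBot ℝ) ≤ Dseq A p (k + 1) i j := by
  refine le_trans ?_ (Dseq_monotone hp1 hpn (Nat.le_add_left 1 k) i j)
  show _ ≤ DseqStep A p (Dseq A p 0) i j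
  refine le_minMaxValue_of_forall_le_diag hp1 hpn fun l => ?_
  simpa [Dseq] using (by linarith [hB j i l] : -B ≤ A i l - A j l)

theorem finite_range_Dseq_succ (hA : ∀ i j, ∃ z : ℤ, A i j = (z : ℝ)) (hp1 : 1 ≤ p)
    (hpn : p ≤ n) : (Set.range fun k => Dseq A p (k + 1)).Finite := by
  obtain ⟨B, hB⟩ := Finite.exists_le fun q : Fin n × Fin n × Fin n => A q.1 q.2.2 - A q.2.1 q.2.2
  have hT := (Set.finite_Icc ⌈-B⌉ ⌊B⌋).image fun z : ℤ => ((z : ℝ) : WithBot ℝ)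
  refine (Set.Finite.pi fun _ => Set.Finite.pi fun _ => hT).subset ?_
  rintro _ ⟨k, rfl⟩ i - j -
  have hlo := neg_le_Dseq_succ (fun i j l => hB (i, j, l)) hp1 hpn k i j
  have hhi := Dseq_succ_le (fun i j l => hB (i, j, l)) hp1 hpn k i j
  rcases Dseq_eq_bot_or_intCast hA hp1 hpn (k + 1) i j with h | ⟨z, hz⟩
  · exact absurd (h ▸ hlo) (WithBot.not_coe_le_bot _)
  · rw [hz, WithBot.coe_le_coe] at hlo hhi
    exact ⟨z, ⟨Int.ceil_le.2 hlo, Int.le_floor.2 hhi⟩, hz.symm⟩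

theorem Dseq_stabilizes_general (n p : ℕ) (hp1 : 1 ≤ p) (hpn : p ≤ n)
    (A : Fin n → Fin n → ℝ) (hA : ∀ i j, ∃ z : ℤ, A i j = (z : ℝ)) :
    ∃ K : ℕ, 1 ≤ K ∧ ∀ k : ℕ, K ≤ k → Dseq A p k = Dseq A p K := by
  have hmono : Monotone fun k => Dseq A p (k + 1) :=
    (Dseq_monotone hp1 hpn).comp fun _ _ h => Nat.succ_le_succ h
  obtain ⟨K, hK⟩ := hmono.exists_forall_ge_eq_of_finite_range (finite_range_Dseq_succ hA hp1 hpn)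
  refine ⟨K + 1, Nat.le_add_left 1 K, fun k hk => ?_⟩
  obtain ⟨k, rfl⟩ : ∃ k', k = k' + 1 := ⟨k - 1, by omega⟩
  exact hK k (by omega)

/-- For a matrix `A` with integer entries, the sequence `(D_p^k)_{k ≥ 1}` stabilizes after
finitely many steps. -/
theorem Dseq_stabilizes (n p : ℕ) (hn : 1 ≤ n) (hp1 : 1 ≤ p) (hpn : p ≤ n)
    (A : Fin n → Fin n → ℝ) (hA : ∀ i j, ∃ z : ℤ, A i j = (z : ℝ)) :
    ∃ K : ℕ, 1 ≤ K ∧ ∀ k : ℕ, K ≤ k → Dseq A p k = Dseq A p K :=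
  Dseq_stabilizes_general n p hp1 hpn A hA
end

section
/- Let n ≥ 1, let p be an integer with 1 ≤ p ≤ n, let A and D be n×n real matrices, and suppose x ∈ ℝⁿ satisfies x_i − x_j ≥ D(i,j) for all i, j and (A ⊗_p x)_i = λ + x_i for all i, where λ ∈ ℝ. Define L(i,j) := ⊕_p(l ↦ A(i,l) + D(l,j)) and U(i,j) := ⊕_p(l ↦ A(i,l) − D(j,l)). Then max{L(1,1), …, L(n,n)} ≤ λ ≤ min{U(1,1), …, U(n,n)}. -/
/-- The maxmin-`p` value of `s : Fin n → ℝ`: the `p`-th smallest element (1-indexed) of the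
multiset `{s 0, …, s (n-1)}`, counted with multiplicity. -/
noncomputable def maxmin {n : ℕ} (p : ℕ) (s : Fin n → ℝ) : ℝ :=
  (Multiset.sort (Multiset.map s (Finset.univ : Finset (Fin n)).val) (· ≤ ·)).getD (p - 1) 0

/-- The maxmin-`p` matrix-vector product: `(A ⊗_p x)_i = ⊕_p (j ↦ A i j + x j)`. -/
noncomputable def mmProd {n : ℕ} (p : ℕ) (A : Fin n → Fin n → ℝ) (x : Fin n → ℝ) :
    Fin n → ℝ :=
  fun i => maxmin p (fun j => A i j + x j)

open Finset

/-
In a sorted list the `k`-th entry is at most `x` exactly when more than `k` entries are, so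
`⊕_p s ≤ y` holds iff at least `p` values of `s` are `≤ y`. Hence `⊕_p` is monotone and commutes
with adding a constant. The eigenvector equation then says `⊕_p(l ↦ A i l + x l - x i) = λ` for every
`i`, and the zone condition bounds `x l - x i` below by `D l i` and above by `-D i l`.
-/

theorem List.Pairwise.getElem_le_iff_lt_countP {α : Type*} [LinearOrder α] {l : List α}
    (hl : l.Pairwise (· ≤ ·)) {k : ℕ} (hk : k < l.length) (x : α) :
    l[k] ≤ x ↔ k < l.countP (· ≤ x) := by
  have hsplit := l.take_append_drop k
  have hmem : l[k] ∈ l.drop k := List.drop_eq_getElem_cons hk ▸ List.mem_cons_self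
  have hle : ∀ a ∈ l.take k, a ≤ l[k] := fun a ha =>
    (List.pairwise_append.1 (hsplit.symm ▸ hl)).2.2 a ha _ hmem
  have hge : ∀ b ∈ l.drop k, l[k] ≤ b := by
    have hd := hl.drop (i := k)
    rw [List.drop_eq_getElem_cons hk, List.pairwise_cons] at hd
    rw [List.drop_eq_getElem_cons hk]
    rintro b (_ | ⟨_, hb⟩)
    exacts [le_rfl, hd.1 b hb]
  have htake : (l.take k).length = k := by simp; omega
  have hcount : l.countP (· ≤ x) = (l.take k).countP (· ≤ x) + (l.drop k).countP (· ≤ x) := by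
    rw [← List.countP_append, hsplit]
  rw [hcount]
  constructor
  · intro hkx
    have hall : (l.take k).countP (· ≤ x) = k := by
      rw [List.countP_eq_length.2 fun a ha => by simpa using (hle a ha).trans hkx, htake]
    have hpos : 0 < (l.drop k).countP (· ≤ x) := List.countP_pos_iff.2 ⟨_, hmem, by simpa⟩
    omega
  · intro hlt
    by_contra! hxk
    have hnone : (l.drop k).countP (· ≤ x) = 0 :=
      List.countP_eq_zero.2 fun b hb => by simpa using hxk.trans_le (hge b hb)
    have := htake ▸ (l.take k).countP_le_length (p := (· ≤ x))
    omega

section maxmin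

variable {n p : ℕ} (hp1 : 1 ≤ p) (hpn : p ≤ n)
include hp1 hpn

theorem maxmin_le_iff (s : Fin n → ℝ) (y : ℝ) :
    maxmin p s ≤ y ↔ p ≤ #{j | s j ≤ y} := by
  set l := Multiset.sort (Multiset.map s (univ : Finset (Fin n)).val) (· ≤ ·)
  have hlen : l.length = n := by simp [l]
  have hcount : l.countP (· ≤ y) = #{j | s j ≤ y} := by
    rw [← Multiset.coe_countP, Multiset.sort_eq, Multiset.countP_map]
    rfl
  rw [maxmin, List.getD_eq_getElem _ _ (by rw [hlen]; omega),
    (Multiset.pairwise_sort _ _).getElem_le_iff_lt_countP, hcount]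
  omega

theorem maxmin_mono {s t : Fin n → ℝ} (h : s ≤ t) : maxmin p s ≤ maxmin p t := by
  rw [maxmin_le_iff hp1 hpn]
  refine ((maxmin_le_iff hp1 hpn t _).1 le_rfl).trans (card_le_card fun j => ?_)
  simpa using (h j).trans

theorem maxmin_add_const (s : Fin n → ℝ) (c : ℝ) :
    maxmin p (fun j => s j + c) = maxmin p s + c := by
  refine eq_of_forall_ge_iff fun y => ?_
  rw [maxmin_le_iff hp1 hpn, ← le_sub_iff_add_le, maxmin_le_iff hp1 hpn]
  simp only [← le_sub_iff_add_le]

end maxmin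

/-- Bounds on the eigenvalue: if `x` lies in the zone of a real DBM `D` and is a maxmin-`p`
eigenvector with eigenvalue `λ`, then with `L i j := ⊕_p(l ↦ A i l + D l j)` and
`U i j := ⊕_p(l ↦ A i l − D j l)` we have
`max_i L i i ≤ λ ≤ min_i U i i`. -/
theorem eigenvalue_bounds (n p : ℕ) (hn : 1 ≤ n) (hp1 : 1 ≤ p) (hpn : p ≤ n)
    (A D : Fin n → Fin n → ℝ) (x : Fin n → ℝ) (lam : ℝ)
    (hzone : ∀ i j, x i - x j ≥ D i j)
    (heig : ∀ i, mmProd p A x i = lam + x i) :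
    (Finset.univ : Finset (Fin n)).sup' ⟨⟨0, hn⟩, Finset.mem_univ _⟩
        (fun i => maxmin p (fun l => A i l + D l i)) ≤ lam ∧
      lam ≤ (Finset.univ : Finset (Fin n)).inf' ⟨⟨0, hn⟩, Finset.mem_univ _⟩
        (fun i => maxmin p (fun l => A i l - D i l)) := by
  have hrow : ∀ i, maxmin p (fun l => A i l + (x l - x i)) = lam := fun i => by
    have hshift : (fun l => A i l + (x l - x i)) = fun l => (A i l + x l) + -x i := by
      ext l; ring
    rw [hshift, maxmin_add_const hp1 hpn, ← mmProd, heig i, add_neg_cancel_right]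
  constructor
  · refine sup'_le _ _ fun i _ => hrow i ▸ maxmin_mono hp1 hpn fun l => ?_
    linarith [hzone l i]
  · refine le_inf' _ _ fun i _ => hrow i ▸ maxmin_mono hp1 hpn fun l => ?_
    linarith [hzone i l]
end
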